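/- Let γ, δ, a, b be real numbers with a, b ∈ [0,1], and let m = min(1 − a + b, 1) (the Łukasiewicz value of A → B). Then δ − (γ + m) ≥ 0 if and only if, for every real r ≤ 1, at least one of the inequalities δ − (γ + r) ≥ 0 or r + a − (b + 1) ≥ 0 holds. -/
import Mathlib


theorem stmt4 (γ δ a b : ℝ) (ha0 : 0 ≤ a) (ha1 : a ≤ 1) (hb0 : 0 ≤ b) (hb1 : b ≤ 1) :
    δ - (γ + min (1 - a + b) 1) ≥ 0 ↔
      ∀ r : ℝ, r ≤ 1 → (δ - (γ + r) ≥ 0 ∨ r + a - (b + 1) ≥ 0) := by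
  constructor
  · intro h r hr
    rcases le_or_gt r (1 - a + b) with h1 | h1
    · left
      have : r ≤ min (1 - a + b) 1 := le_min h1 hr
      linarith
    · right; linarith
  · intro h
    have key : ∀ ε > (0:ℝ), min (1 - a + b) 1 - ε ≤ δ - γ := by
      intro ε hε
      have hm : min (1 - a + b) 1 ≤ 1 - a + b := min_le_left _ _
      have hr1 : min (1 - a + b) 1 - ε ≤ 1 := by
        have := min_le_right (1 - a + b) (1:ℝ); linarith
      rcases h _ hr1 with h2 | h2
      · linarith
      · linarith
    have : min (1 - a + b) 1 ≤ δ - γ := by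
      by_contra hc
      push_neg at hc
      have := key ((min (1 - a + b) 1 - (δ - γ)) / 2) (by linarith)
      linarith
    linarith
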